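/- Let n ≥ 2 and let λ₁ ≥ λ₂ ≥ ⋯ ≥ λₙ be real numbers with ∑ᵢ arctan(λᵢ) ≥ (n-1)·π/2. Then for every j with 1 ≤ j ≤ n-1, one has λⱼ · λₙ ≥ 1. -/
import Mathlib


open Real

theorem stmt_1 (n : ℕ) (hn : 2 ≤ n) (lam : Fin n → ℝ)
    (hord : ∀ i j : Fin n, i ≤ j → lam j ≤ lam i)
    (hsum : (∑ i, arctan (lam i)) ≥ (n - 1 : ℝ) * π / 2) :
    ∀ j : Fin n, (j : ℕ) < n - 1 → lam j * lam ⟨n - 1, by omega⟩ ≥ 1 := by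
  intro j hj
  set m : Fin n := ⟨n - 1, by omega⟩ with hm
  have hjm : j ≠ m := by
    intro h; rw [h] at hj; simp [hm] at hj
  -- split the sum
  have hsplit : ∑ i, arctan (lam i)
      = arctan (lam j) + arctan (lam m) + ∑ i ∈ (Finset.univ.erase j).erase m, arctan (lam i) := by
    rw [← Finset.add_sum_erase _ _ (Finset.mem_univ j),
        ← Finset.add_sum_erase _ _ (Finset.mem_erase.mpr ⟨Ne.symm hjm, Finset.mem_univ m⟩)]
    ring
  have hcard : ((Finset.univ.erase j).erase m).card = n - 2 := by
    rw [Finset.card_erase_of_mem (Finset.mem_erase.mpr ⟨Ne.symm hjm, Finset.mem_univ m⟩),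
        Finset.card_erase_of_mem (Finset.mem_univ j), Finset.card_univ, Fintype.card_fin]
    omega
  have hrest : ∑ i ∈ (Finset.univ.erase j).erase m, arctan (lam i) ≤ (n - 2 : ℝ) * (π / 2) := by
    calc ∑ i ∈ (Finset.univ.erase j).erase m, arctan (lam i)
        ≤ ∑ _i ∈ (Finset.univ.erase j).erase m, (π / 2) :=
          Finset.sum_le_sum fun i _ => le_of_lt (arctan_lt_pi_div_two _)
      _ = (n - 2 : ℝ) * (π / 2) := by
          rw [Finset.sum_const, hcard, nsmul_eq_mul]
          push_cast [Nat.cast_sub hn]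
          ring
  have hkey : arctan (lam j) + arctan (lam m) ≥ π / 2 := by
    have : (n - 1 : ℝ) * π / 2 - (n - 2 : ℝ) * (π / 2) = π / 2 := by ring
    nlinarith [hsum, hsplit, hrest]
  have hma : arctan (lam m) < π / 2 := arctan_lt_pi_div_two _
  have hja : arctan (lam j) < π / 2 := arctan_lt_pi_div_two _
  have hjp : 0 < lam j := by
    have : 0 < arctan (lam j) := by linarith
    rwa [← arctan_zero, arctan_strictMono.lt_iff_lt] at this
  have hmp : 0 < lam m := by
    have : 0 < arctan (lam m) := by linarith
    rwa [← arctan_zero, arctan_strictMono.lt_iff_lt] at this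
  have hinv : arctan (lam m)⁻¹ ≤ arctan (lam j) := by
    rw [arctan_inv_of_pos hmp]; linarith
  have : (lam m)⁻¹ ≤ lam j := by
    rwa [arctan_strictMono.le_iff_le] at hinv
  calc (1 : ℝ) = (lam m)⁻¹ * lam m := by field_simp
    _ ≤ lam j * lam m := by nlinarith
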